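/- Let (T, φ) be a quasi-Sturmian coloring, n ≥ N₀ + 1. In the notation of the induction algorithm, suppose S_n ≠ C_n and A_{n+1}, B_{n+1} are the two (n+1)-extensions of S_n chosen so that A_{n+1} contains more n-balls of class A_n than B_{n+1} does. Then A_{n+1} and B_{n+1} cannot contain the same number of n-balls of class A_n; hence this choice of the sequences (A_n), (B_n) with A_{n+1}, B_{n+1} strongly adjacent to A_n, B_n respectively is unique. -/

import Mathlib

open SimpleGraph

variable {V A : Type*}

/-- Equivalence of colored `n`-balls: a color-preserving isometry between the balls
of radius `n` centered at `u` and `v`, sending `u` to `v`. -/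
def BallEquiv (G : SimpleGraph V) (φ : V → A) (n : ℕ) (u v : V) : Prop :=
  ∃ f : V → V, f u = v ∧
    (∀ x y : V, G.dist u x ≤ n → G.dist u y ≤ n → G.dist (f x) (f y) = G.dist x y) ∧
    (∀ x : V, G.dist u x ≤ n → φ (f x) = φ x) ∧
    (∀ z : V, G.dist v z ≤ n → ∃ x : V, G.dist u x ≤ n ∧ f x = z)

/-- The factor complexity `b(n)`: the number of classes of colored `n`-balls. -/
noncomputable def complexity (G : SimpleGraph V) (φ : V → A) (n : ℕ) : ℕ :=
  Nat.card (Quot (BallEquiv G φ n))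

/-- The colored `n`-ball at `u` is special: it admits two inequivalent `(n+1)`-extensions. -/
def IsSpecialCenter (G : SimpleGraph V) (φ : V → A) (n : ℕ) (u : V) : Prop :=
  ∃ v, BallEquiv G φ n u v ∧ ¬ BallEquiv G φ (n+1) u v

/-- The type set `Λ_u` of a vertex. -/
def typeSet (G : SimpleGraph V) (φ : V → A) (u : V) : Set ℕ :=
  {n | IsSpecialCenter G φ n u}

/-- Two vertices are in the same class: their colored `n`-balls agree for all `n`. -/
def SameClass (G : SimpleGraph V) (φ : V → A) (u v : V) : Prop :=
  ∀ n, BallEquiv G φ n u v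

/-- `m` is the maximal type of `u`. -/
def MaxType (G : SimpleGraph V) (φ : V → A) (u : V) (m : ℕ) : Prop :=
  m ∈ typeSet G φ u ∧ ∀ k ∈ typeSet G φ u, k ≤ m

/-- Weak adjacency of classes of colored `n`-balls (given by representatives `x`, `y`). -/
def WeakAdj (G : SimpleGraph V) (φ : V → A) (n : ℕ) (x y : V) : Prop :=
  ∃ v w, G.Adj v w ∧ BallEquiv G φ n x v ∧ BallEquiv G φ n y w

/-- Strong adjacency: every ball of the class of `x` has a neighboring ball of the class of `y`. -/
def StrongAdj (G : SimpleGraph V) (φ : V → A) (n : ℕ) (x y : V) : Prop :=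
  ∀ v, BallEquiv G φ n x v → ∃ w, G.Adj v w ∧ BallEquiv G φ n y w

/-- The factor graph `𝒢ₙ` on classes of colored `n`-balls. -/
def FactorGraph (G : SimpleGraph V) (φ : V → A) (n : ℕ) :
    SimpleGraph (Quot (BallEquiv G φ n)) where
  Adj a b := a ≠ b ∧ ∃ u v, G.Adj u v ∧ Quot.mk _ u = a ∧ Quot.mk _ v = b
  symm := ⟨by rintro a b ⟨hne, u, v, h, hu, hv⟩; exact ⟨hne.symm, v, u, h.symm, hv, hu⟩⟩
  loopless := ⟨by rintro a ⟨hne, _⟩; exact hne rfl⟩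

/-- The quotient graph `X = Γ\T` on classes of vertices. -/
def QuotGraph (G : SimpleGraph V) (φ : V → A) :
    SimpleGraph (Quot (SameClass G φ)) where
  Adj a b := a ≠ b ∧ ∃ u v, G.Adj u v ∧ Quot.mk _ u = a ∧ Quot.mk _ v = b
  symm := ⟨by rintro a b ⟨hne, u, v, h, hu, hv⟩; exact ⟨hne.symm, v, u, h.symm, hv, hu⟩⟩
  loopless := ⟨by rintro a ⟨hne, _⟩; exact hne rfl⟩

/-!
In a tree, the colored `(n+1)`-ball at a vertex is determined by its color and by how many of
its neighbors carry `n`-balls of each class: a class-preserving matching of the neighbors is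
glued, cone by cone, into an isometry of `(n+1)`-balls. When `b(n) = b(n-1) + 1`, every
`(n-1)`-ball other than `S_{n-1}` has a unique `n`-extension, and `S_{n-1}` has exactly the two
extensions `A_n`, `B_n`. Since `A_{n+1}` and `B_{n+1}` both extend `S_n`, they have equally
many neighbors in each `(n-1)`-class; equal numbers of neighbors of class `A_n` would then
give equal numbers of class `B_n`, hence of every `n`-class, and `A_{n+1} = B_{n+1}`.
-/

section

variable {G : SimpleGraph V} {φ : V → A}

theorem Function.Surjective.injOn_compl_singleton {α β : Type*} {F : α → β}
    (hF : F.Surjective) (hcard : Nat.card α = Nat.card β + 1) {a b : α} (hab : a ≠ b)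
    (hFab : F a = F b) : Set.InjOn F {b}ᶜ := by
  have : Finite α := Nat.finite_of_card_ne_zero (by omega)
  have : Finite β := Finite.of_surjective F hF
  have himage : F '' {b}ᶜ = Set.univ := by
    refine Set.eq_univ_of_forall fun y => ?_
    obtain ⟨x, rfl⟩ := hF y
    by_cases hx : x = b
    · exact ⟨a, hab, by rw [hFab, hx]⟩
    · exact ⟨x, hx, rfl⟩
  refine Set.injOn_of_ncard_image_eq ?_
  rw [himage, Set.ncard_univ, Set.ncard_compl, Set.ncard_singleton]
  omega

theorem Function.Surjective.eq_or_of_card_eq_add_one {α β : Type*} {F : α → β}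
    (hF : F.Surjective) (hcard : Nat.card α = Nat.card β + 1) {a b : α} (hab : a ≠ b)
    (hFab : F a = F b) {x y : α} (hxy : F x = F y) :
    x = y ∨ x = a ∧ y = b ∨ x = b ∧ y = a := by
  have hb := hF.injOn_compl_singleton hcard hab hFab
  have ha := hF.injOn_compl_singleton hcard hab.symm hFab.symm
  rcases eq_or_ne x y with h | h
  · exact Or.inl h
  have hxyb : x = b ∨ y = b := by
    by_contra! h'
    exact h (hb h'.1 h'.2 hxy)
  have hxya : x = a ∨ y = a := by
    by_contra! h'
    exact h (ha h'.1 h'.2 hxy)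
  grind

theorem Equiv.exists_bijOn {α : Type*} {s t : Set α} (e : s ≃ t) :
    ∃ σ : α → α, Set.BijOn σ s t ∧ ∀ w : s, σ w = e w := by
  classical
  refine ⟨fun w => if h : w ∈ s then e ⟨w, h⟩ else w, ⟨fun w hw => by simp [hw],
    fun w hw w' hw' h => ?_, fun z hz => ⟨e.symm ⟨z, hz⟩, by simp⟩⟩, fun w => by simp⟩
  exact congrArg Subtype.val (e.injective (Subtype.ext (by simpa [hw, hw'] using h)))

theorem exists_bijOn_of_card_eq {α : Type*} {r : α → α → Prop} (hr : Equivalence r)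
    {s t : Set α} (hs : s.Finite) (ht : t.Finite)
    (h : ∀ x, Nat.card {w // w ∈ s ∧ r x w} = Nat.card {w // w ∈ t ∧ r x w}) :
    ∃ σ, Set.BijOn σ s t ∧ ∀ w ∈ s, r w (σ w) := by
  have hfiber : ∀ (u : Set α) (x : α),
      Nat.card {w : u // Quot.mk r (w : α) = Quot.mk r x} = Nat.card {w // w ∈ u ∧ r x w} :=
    fun u x => Nat.card_congr <|
      (Equiv.subtypeSubtypeEquivSubtypeInter (· ∈ u) (Quot.mk r · = Quot.mk r x)).trans <|
        Equiv.subtypeEquivRight fun w => and_congr_right fun _ =>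
          (hr.quot_mk_eq_iff w x).trans ⟨hr.symm, hr.symm⟩
  have e : ∀ c : Quot r, {w : s // Quot.mk r (w : α) = c} ≃ {w : t // Quot.mk r (w : α) = c} :=
    fun c => Classical.choice <| by
      induction c using Quot.ind with
      | mk x =>
        have := hs.to_subtype
        have := ht.to_subtype
        exact Finite.card_eq.1 ((hfiber s x).trans ((h x).trans (hfiber t x).symm))
  obtain ⟨σ, hσ, hσe⟩ := (Equiv.ofFiberEquiv e).exists_bijOn
  refine ⟨σ, hσ, fun w hw => ?_⟩
  rw [hσe ⟨w, hw⟩]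
  exact hr.symm ((hr.quot_mk_eq_iff _ _).1 (Equiv.ofFiberEquiv_map e ⟨w, hw⟩))

theorem SimpleGraph.Connected.exists_adj_dist_eq_add_one (hG : G.Connected) {a x : V}
    (hne : x ≠ a) : ∃ w, G.Adj a w ∧ G.dist a x = G.dist w x + 1 := by
  obtain ⟨p, hp⟩ := hG.exists_walk_length_eq_dist a x
  cases p with
  | nil => exact absurd rfl hne
  | @cons _ w _ h q =>
    have hle := dist_le q
    have htri := hG.dist_triangle (u := a) (v := w) (w := x)
    rw [dist_eq_one_iff_adj.mpr h] at htri
    rw [Walk.length_cons] at hp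
    exact ⟨w, h, by omega⟩

theorem SimpleGraph.IsTree.dist_eq_add_one_or (hG : G.IsTree) {a w : V} (h : G.Adj a w)
    (x : V) : G.dist a x = G.dist w x + 1 ∨ G.dist w x = G.dist a x + 1 := by
  simpa only [dist_comm (u := x)] using hG.dist_eq_dist_add_one_of_adj x h

theorem SimpleGraph.IsTree.eq_of_adj_of_dist_eq_add_one (hG : G.IsTree) {a w w' x : V}
    (hw : G.Adj a w) (hw' : G.Adj a w') (h : G.dist a x = G.dist w x + 1)
    (h' : G.dist a x = G.dist w' x + 1) : w = w' := by
  obtain ⟨q, hq⟩ := hG.connected.exists_walk_length_eq_dist w x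
  obtain ⟨q', hq'⟩ := hG.connected.exists_walk_length_eq_dist w' x
  have hpath : ∀ {u} (hu : G.Adj a u) (p : G.Walk u x), p.length + 1 = G.dist a x →
      (p.cons hu).IsPath := fun hu p hp => (p.cons hu).isPath_of_length_eq_dist hp
  have := (hG.existsUnique_path a x).unique (hpath hw q (by omega)) (hpath hw' q' (by omega))
  simpa using congrArg Walk.snd this

theorem SimpleGraph.IsTree.dist_eq_add_one_of_adj_of_ne (hG : G.IsTree) {a x u t : V}
    (hax : G.Adj a x) (hxu : G.Adj x u) (hua : u ≠ a) (ht : G.dist x t = G.dist u t + 1) :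
    G.dist a t = G.dist x t + 1 :=
  (hG.dist_eq_add_one_or hax t).resolve_right fun h =>
    hua (hG.eq_of_adj_of_dist_eq_add_one hxu hax.symm ht h)

theorem SimpleGraph.IsTree.dist_eq_add_one_of_dist_eq_add (hG : G.IsTree) {a u x y : V}
    (hua : u ≠ a) (hux : G.Adj u x) (hy : G.dist u y = G.dist u a + G.dist a y)
    (hx : G.dist u y = G.dist x y + 1) : G.dist u a = G.dist x a + 1 := by
  obtain ⟨z, huz, hz⟩ := hG.connected.exists_adj_dist_eq_add_one hua.symm
  have htri : G.dist z y ≤ G.dist z a + G.dist a y := hG.connected.dist_triangle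
  have hzy : G.dist u y = G.dist z y + 1 := by
    have := hG.dist_eq_add_one_or huz y
    omega
  obtain rfl := hG.eq_of_adj_of_dist_eq_add_one huz hux hzy hx
  exact hz

theorem SimpleGraph.IsTree.dist_eq_dist_add_dist (hG : G.IsTree) {a w w' x y : V}
    (hw : G.Adj a w) (hw' : G.Adj a w') (hne : w ≠ w')
    (hx : G.dist a x = G.dist w x + 1) (hy : G.dist a y = G.dist w' y + 1) :
    G.dist x y = G.dist x a + G.dist a y := by
  suffices ∀ k x, G.dist w x = k → G.dist a x = k + 1 →
      G.dist x y = G.dist x a + G.dist a y from this _ x rfl hx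
  intro k
  induction k with
  | zero =>
    intro x hwx hax
    obtain rfl := hG.connected.dist_eq_zero_iff.mp hwx
    have hwy : G.dist w y = G.dist a y + 1 := (hG.dist_eq_add_one_or hw y).resolve_left
      fun h => hne (hG.eq_of_adj_of_dist_eq_add_one hw hw' h hy)
    rw [hwy, dist_eq_one_iff_adj.mpr hw.symm]
    omega
  | succ k ih =>
    intro x hwx hax
    have hxw : w ≠ x := by
      rintro rfl
      simp at hwx
    obtain ⟨u, hxu, hu⟩ := hG.connected.exists_adj_dist_eq_add_one hxw
    rw [dist_comm (u := x), dist_comm (u := u)] at hu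
    have hwu : G.dist w u = k := by omega
    have htri : G.dist a u ≤ G.dist a w + G.dist w u := hG.connected.dist_triangle
    rw [dist_eq_one_iff_adj.mpr hw] at htri
    have hau : G.dist a u = k + 1 := by
      have := hG.dist_eq_add_one_or hxu a
      rw [dist_comm (u := x), dist_comm (u := u)] at this
      omega
    have ihu := ih u hwu hau
    have hxa : G.dist x a = G.dist a x := dist_comm
    have hua' : G.dist u a = G.dist a u := dist_comm
    rcases hG.dist_eq_add_one_or hxu y with h | h
    · omega
    · have hua : u ≠ a := by
        rintro rfl
        simp at hau
      have := hG.dist_eq_add_one_of_dist_eq_add hua hxu.symm ihu h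
      omega

structure IsColoredIsometryOn (G : SimpleGraph V) (φ : V → A) (f : V → V) (s t : Set V) :
    Prop where
  mapsTo : Set.MapsTo f s t
  surjOn : Set.SurjOn f s t
  dist_eq : ∀ x ∈ s, ∀ y ∈ s, G.dist (f x) (f y) = G.dist x y
  color_eq : ∀ x ∈ s, φ (f x) = φ x

namespace IsColoredIsometryOn

variable {f g : V → V} {s t u : Set V}

theorem id (s : Set V) : IsColoredIsometryOn G φ id s s :=
  ⟨Set.mapsTo_id s, Set.surjOn_id s, fun _ _ _ _ => rfl, fun _ _ => rfl⟩

theorem comp (hg : IsColoredIsometryOn G φ g t u) (hf : IsColoredIsometryOn G φ f s t) :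
    IsColoredIsometryOn G φ (g ∘ f) s u where
  mapsTo := hg.mapsTo.comp hf.mapsTo
  surjOn := hg.surjOn.comp hf.surjOn
  dist_eq x hx y hy := (hg.dist_eq _ (hf.mapsTo hx) _ (hf.mapsTo hy)).trans (hf.dist_eq x hx y hy)
  color_eq x hx := (hg.color_eq _ (hf.mapsTo hx)).trans (hf.color_eq x hx)

theorem bijOn (hconn : G.Connected) (hf : IsColoredIsometryOn G φ f s t) : Set.BijOn f s t :=
  ⟨hf.mapsTo, fun x hx y hy hxy => hconn.dist_eq_zero_iff.mp <| by
    rw [← hf.dist_eq x hx y hy, hxy, dist_self], hf.surjOn⟩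

theorem exists_inv (hconn : G.Connected) (hf : IsColoredIsometryOn G φ f s t) :
    ∃ g, IsColoredIsometryOn G φ g t s ∧ ∀ x ∈ s, g (f x) = x := by
  have : Nonempty V := hconn.nonempty
  have hbij := hf.bijOn hconn
  have hinv := hbij.invOn_invFunOn
  have hg := hbij.symm hinv.symm
  refine ⟨Function.invFunOn f s, ⟨hg.mapsTo, hg.surjOn, fun z hz z' hz' => ?_, fun z hz => ?_⟩,
    fun x hx => hinv.1 hx⟩
  · rw [← hf.dist_eq _ (hg.mapsTo hz) _ (hg.mapsTo hz'), hinv.2 hz, hinv.2 hz']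
  · rw [← hf.color_eq _ (hg.mapsTo hz), hinv.2 hz]

theorem restrict (hf : IsColoredIsometryOn G φ f s t) {s' t' : Set V} (hs : s' ⊆ s)
    (ht : t' ⊆ t) (hmem : ∀ x ∈ s, x ∈ s' ↔ f x ∈ t') : IsColoredIsometryOn G φ f s' t' where
  mapsTo x hx := (hmem x (hs hx)).1 hx
  surjOn z hz := by
    obtain ⟨x, hx, rfl⟩ := hf.surjOn (ht hz)
    exact ⟨x, (hmem x hx).2 hz, rfl⟩
  dist_eq x hx y hy := hf.dist_eq x (hs hx) y (hs hy)
  color_eq x hx := hf.color_eq x (hs hx)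

end IsColoredIsometryOn

theorem ballEquiv_iff {n : ℕ} {u v : V} : BallEquiv G φ n u v ↔
    ∃ f, f u = v ∧
      IsColoredIsometryOn G φ f {x | G.dist u x ≤ n} {z | G.dist v z ≤ n} := by
  constructor
  · rintro ⟨f, hfu, hdist, hcol, hsurj⟩
    refine ⟨f, hfu, ⟨fun x hx => ?_, hsurj, fun x hx y hy => hdist x y hx hy, hcol⟩⟩
    change G.dist v (f x) ≤ n
    rwa [← hfu, hdist u x (by simp) hx]
  · rintro ⟨f, hfu, hf⟩
    exact ⟨f, hfu, fun x y hx hy => hf.dist_eq x hx y hy, hf.color_eq, hf.surjOn⟩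

theorem BallEquiv.refl (n : ℕ) (u : V) : BallEquiv G φ n u u :=
  ballEquiv_iff.2 ⟨id, rfl, .id _⟩

theorem BallEquiv.trans {n : ℕ} {u v w : V} (h₁ : BallEquiv G φ n u v)
    (h₂ : BallEquiv G φ n v w) : BallEquiv G φ n u w := by
  obtain ⟨f, hfu, hf⟩ := ballEquiv_iff.1 h₁
  obtain ⟨g, hgv, hg⟩ := ballEquiv_iff.1 h₂
  exact ballEquiv_iff.2 ⟨g ∘ f, by simp [hfu, hgv], hg.comp hf⟩

theorem BallEquiv.symm (hconn : G.Connected) {n : ℕ} {u v : V} (h : BallEquiv G φ n u v) :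
    BallEquiv G φ n v u := by
  obtain ⟨f, hfu, hf⟩ := ballEquiv_iff.1 h
  obtain ⟨g, hg, hgf⟩ := hf.exists_inv hconn
  exact ballEquiv_iff.2 ⟨g, by rw [← hfu, hgf u (by simp)], hg⟩

theorem ballEquiv_equivalence (hconn : G.Connected) (n : ℕ) :
    Equivalence (BallEquiv G φ n) :=
  ⟨BallEquiv.refl n, BallEquiv.symm hconn, BallEquiv.trans⟩

theorem BallEquiv.mono {m n : ℕ} (hmn : m ≤ n) {u v : V} (h : BallEquiv G φ n u v) :
    BallEquiv G φ m u v := by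
  obtain ⟨f, hfu, hf⟩ := ballEquiv_iff.1 h
  refine ballEquiv_iff.2 ⟨f, hfu, hf.restrict (fun x hx => le_trans hx hmn)
    (fun z hz => le_trans hz hmn) fun x hx => ?_⟩
  change G.dist u x ≤ m ↔ G.dist v (f x) ≤ m
  rw [← hfu, hf.dist_eq u (by simp) x hx]

theorem BallEquiv.color_eq {n : ℕ} {u v : V} (h : BallEquiv G φ n u v) : φ u = φ v := by
  obtain ⟨f, rfl, hf⟩ := ballEquiv_iff.1 h
  exact (hf.color_eq u (by simp)).symm

/-- For `u` adjacent to `w`: the vertices within distance `m` of `w` lying beyond `w` as seen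
from `u`. -/
def cone (G : SimpleGraph V) (u w : V) (m : ℕ) : Set V :=
  {t | G.dist w t ≤ m ∧ G.dist u t = G.dist w t + 1}

def ConeEquiv (G : SimpleGraph V) (φ : V → A) (m : ℕ) (u w v z : V) : Prop :=
  ∃ f, f w = z ∧ IsColoredIsometryOn G φ f (cone G u w m) (cone G v z m)

def star (G : SimpleGraph V) (x : V) (S : Set V) (m : ℕ) : Set V :=
  {s | s = x ∨ ∃ t ∈ S, s ∈ cone G x t m}

theorem self_mem_cone {u w : V} (h : G.Adj u w) (m : ℕ) : w ∈ cone G u w m := by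
  simp [cone, dist_eq_one_iff_adj.mpr h]

theorem cone_zero (hconn : G.Connected) {u w : V} (h : G.Adj u w) : cone G u w 0 = {w} := by
  ext t
  constructor
  · rintro ⟨ht, -⟩
    exact (hconn.dist_eq_zero_iff.mp (Nat.le_zero.mp ht)).symm
  · rintro rfl
    exact self_mem_cone h 0

theorem ConeEquiv.trans {m : ℕ} {u w v z u' w' : V} (h₁ : ConeEquiv G φ m u w v z)
    (h₂ : ConeEquiv G φ m v z u' w') : ConeEquiv G φ m u w u' w' := by
  obtain ⟨f, hfw, hf⟩ := h₁
  obtain ⟨g, hgz, hg⟩ := h₂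
  exact ⟨g ∘ f, by simp [hfw, hgz], hg.comp hf⟩

theorem ConeEquiv.symm (hconn : G.Connected) {m : ℕ} {u w v z : V} (hw : G.Adj u w)
    (h : ConeEquiv G φ m u w v z) : ConeEquiv G φ m v z u w := by
  obtain ⟨f, hfw, hf⟩ := h
  obtain ⟨g, hg, hgf⟩ := hf.exists_inv hconn
  exact ⟨g, by rw [← hfw, hgf w (self_mem_cone hw m)], hg⟩

theorem coneEquiv_zero (hconn : G.Connected) {u w v z : V} (hw : G.Adj u w) (hz : G.Adj v z)
    (hcol : φ w = φ z) : ConeEquiv G φ 0 u w v z := by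
  refine ⟨fun _ => z, rfl, ?_⟩
  rw [cone_zero hconn hw, cone_zero hconn hz]
  refine ⟨fun _ _ => rfl, fun _ hz => ⟨w, rfl, hz.symm⟩, ?_, fun x hx => ?_⟩
  · rintro x rfl y rfl
    simp
  · rw [Set.mem_singleton_iff.mp hx, hcol]

theorem star_neighborSet (htree : G.IsTree) (a : V) (n : ℕ) :
    star G a (G.neighborSet a) n = {s | G.dist a s ≤ n + 1} := by
  ext s
  constructor
  · rintro (rfl | ⟨t, -, hts, hat⟩)
    · simp
    · change G.dist a s ≤ n + 1
      omega
  · intro hs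
    by_cases hsa : s = a
    · exact Or.inl hsa
    · obtain ⟨t, hat, ht⟩ := htree.connected.exists_adj_dist_eq_add_one hsa
      exact Or.inr ⟨t, hat, by change G.dist a s ≤ n + 1 at hs; omega, ht⟩

theorem star_neighborSet_diff (htree : G.IsTree) {a x : V} (hax : G.Adj a x) (m : ℕ) :
    star G x (G.neighborSet x \ {a}) m = cone G a x (m + 1) := by
  ext s
  constructor
  · rintro (rfl | ⟨t, ⟨hxt, hta⟩, hts, hxs⟩)
    · exact self_mem_cone hax _
    · exact ⟨by omega, htree.dist_eq_add_one_of_adj_of_ne hax hxt hta hxs⟩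
  · rintro ⟨hxs, has⟩
    by_cases hsx : s = x
    · exact Or.inl hsx
    · obtain ⟨t, hxt, ht⟩ := htree.connected.exists_adj_dist_eq_add_one hsx
      refine Or.inr ⟨t, ⟨hxt, ?_⟩, by omega, ht⟩
      rintro rfl
      omega

theorem exists_eqOn_cones (htree : G.IsTree) {m : ℕ} {x : V} {S : Set V}
    (hS : S ⊆ G.neighborSet x) (g : V → V → V) (y : V) :
    ∃ F : V → V, F x = y ∧ ∀ t ∈ S, ∀ s ∈ cone G x t m, F s = g t s := by
  classical
  refine ⟨fun s => if h : ∃ t ∈ S, s ∈ cone G x t m then g h.choose s else y,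
    dif_neg fun ⟨t, _, _, h⟩ => by simp at h, fun t ht s hs => ?_⟩
  have h : ∃ t ∈ S, s ∈ cone G x t m := ⟨t, ht, hs⟩
  simp only [dif_pos h]
  rw [htree.eq_of_adj_of_dist_eq_add_one (hS h.choose_spec.1) (hS ht) h.choose_spec.2.2 hs.2]

/-- In a tree, points in different cones are joined through the center, so the cone isometries
also preserve distances between cones. -/
theorem exists_isometryOn_star (htree : G.IsTree) {m : ℕ} {x y : V} {S T : Set V}
    {σ : V → V} (hS : S ⊆ G.neighborSet x) (hT : T ⊆ G.neighborSet y) (hcol : φ x = φ y)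
    (hσ : Set.BijOn σ S T) (hcone : ∀ t ∈ S, ConeEquiv G φ m x t y (σ t)) :
    ∃ F, F x = y ∧ IsColoredIsometryOn G φ F (star G x S m) (star G y T m) := by
  choose! g hgt hg using hcone
  obtain ⟨F, hFx, hF⟩ := exists_eqOn_cones htree hS g y
  have hdist_center : ∀ t ∈ S, ∀ s ∈ cone G x t m, G.dist y (F s) = G.dist x s := by
    intro t ht s hs
    have hmem := (hg t ht).mapsTo hs
    rw [hF t ht s hs, hmem.2, ← hgt t ht, (hg t ht).dist_eq _ (self_mem_cone (hS ht) m) s hs,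
      hs.2]
  have hdist_x : ∀ s ∈ star G x S m, G.dist y (F s) = G.dist x s := by
    rintro s (rfl | ⟨t, ht, hs⟩)
    · simp [hFx]
    · exact hdist_center t ht s hs
  refine ⟨F, hFx, ⟨?_, ?_, ?_, ?_⟩⟩
  · rintro s (rfl | ⟨t, ht, hs⟩)
    · exact Or.inl hFx
    · exact Or.inr ⟨σ t, hσ.mapsTo ht, hF t ht s hs ▸ (hg t ht).mapsTo hs⟩
  · rintro r (rfl | ⟨τ, hτ, hr⟩)
    · exact ⟨x, Or.inl rfl, hFx⟩
    · obtain ⟨t, ht, rfl⟩ := hσ.surjOn hτ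
      obtain ⟨s, hs, rfl⟩ := (hg t ht).surjOn hr
      exact ⟨s, Or.inr ⟨t, ht, hs⟩, hF t ht s hs⟩
  · intro s hs s' hs'
    rcases hs with rfl | ⟨t, ht, hs⟩
    · rw [hFx]
      exact hdist_x s' hs'
    rcases hs' with rfl | ⟨t', ht', hs'⟩
    · rw [hFx, dist_comm, hdist_center t ht s hs, dist_comm]
    by_cases htt : t = t'
    · subst htt
      rw [hF t ht s hs, hF t ht s' hs']
      exact (hg t ht).dist_eq s hs s' hs'
    · have hFs := hF t ht s hs ▸ (hg t ht).mapsTo hs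
      have hFs' := hF t' ht' s' hs' ▸ (hg t' ht').mapsTo hs'
      rw [htree.dist_eq_dist_add_dist (hT (hσ.mapsTo ht)) (hT (hσ.mapsTo ht'))
          (hσ.injOn.ne ht ht' htt) hFs.2 hFs'.2,
        htree.dist_eq_dist_add_dist (hS ht) (hS ht') htt hs.2 hs'.2, dist_comm,
        hdist_center t ht s hs, hdist_center t' ht' s' hs', dist_comm (u := s)]
  · rintro s (rfl | ⟨t, ht, hs⟩)
    · rw [hFx, hcol]
    · rw [hF t ht s hs]
      exact (hg t ht).color_eq s hs

theorem ballEquiv_succ_of_coneEquiv (htree : G.IsTree) {n : ℕ} {a b : V} {σ : V → V}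
    (hcol : φ a = φ b) (hσ : Set.BijOn σ (G.neighborSet a) (G.neighborSet b))
    (hcone : ∀ t ∈ G.neighborSet a, ConeEquiv G φ n a t b (σ t)) :
    BallEquiv G φ (n + 1) a b := by
  obtain ⟨F, hFa, hF⟩ := exists_isometryOn_star htree subset_rfl subset_rfl hcol hσ hcone
  rw [star_neighborSet htree, star_neighborSet htree] at hF
  exact ballEquiv_iff.2 ⟨F, hFa, hF⟩

theorem coneEquiv_succ_of_coneEquiv (htree : G.IsTree) {m : ℕ} {a x b y : V} {σ : V → V}
    (hax : G.Adj a x) (hby : G.Adj b y) (hcol : φ x = φ y)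
    (hσ : Set.BijOn σ (G.neighborSet x \ {a}) (G.neighborSet y \ {b}))
    (hcone : ∀ t ∈ G.neighborSet x \ {a}, ConeEquiv G φ m x t y (σ t)) :
    ConeEquiv G φ (m + 1) a x b y := by
  obtain ⟨F, hFx, hF⟩ :=
    exists_isometryOn_star htree Set.sdiff_subset Set.sdiff_subset hcol hσ hcone
  rw [star_neighborSet_diff htree hax, star_neighborSet_diff htree hby] at hF
  exact ⟨F, hFx, hF⟩

theorem BallEquiv.exists_bijOn_neighborSet (hconn : G.Connected) {k : ℕ} {a b : V}
    (h : BallEquiv G φ (k + 1) a b) :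
    ∃ f, Set.BijOn f (G.neighborSet a) (G.neighborSet b) ∧
      ∀ t ∈ G.neighborSet a, BallEquiv G φ k t (f t) ∧ ConeEquiv G φ k a t b (f t) := by
  obtain ⟨f, hfa, hf⟩ := ballEquiv_iff.1 h
  have ha : a ∈ {x | G.dist a x ≤ k + 1} := by simp
  have hnbr : ∀ t ∈ G.neighborSet a, G.dist a t ≤ k + 1 := fun t ht => by
    rw [dist_eq_one_iff_adj.mpr ht]
    omega
  have hball : ∀ {c t : V}, G.Adj c t → {x | G.dist t x ≤ k} ⊆ {x | G.dist c x ≤ k + 1} :=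
    fun {c t} hct x (hx : G.dist t x ≤ k) => (hconn.dist_triangle (v := t)).trans <| by
      rw [dist_eq_one_iff_adj.mpr hct]
      omega
  have hN : IsColoredIsometryOn G φ f (G.neighborSet a) (G.neighborSet b) := by
    refine hf.restrict hnbr (fun r hr => ?_) fun x hx => ?_
    · change G.dist b r ≤ k + 1
      rw [dist_eq_one_iff_adj.mpr hr]
      omega
    · simp only [mem_neighborSet, ← dist_eq_one_iff_adj, ← hfa, hf.dist_eq a ha x hx]
  refine ⟨f, hN.bijOn hconn, fun t ht => ?_⟩
  have hft : G.Adj b (f t) := hN.mapsTo ht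
  constructor
  · refine ballEquiv_iff.2 ⟨f, rfl, hf.restrict (hball ht) (hball hft) fun x hx => ?_⟩
    change G.dist t x ≤ k ↔ G.dist (f t) (f x) ≤ k
    rw [hf.dist_eq t (hnbr t ht) x hx]
  · refine ⟨f, rfl, hf.restrict (fun x hx => hball ht hx.1) (fun x hx => hball hft hx.1)
      fun x hx => ?_⟩
    change _ ∧ _ ↔ _ ∧ _
    rw [← hfa, hf.dist_eq t (hnbr t ht) x hx, hf.dist_eq a ha x hx]

theorem exists_bijOn_diff_of_coneEquiv (hconn : G.Connected) {m : ℕ} {x y a b : V}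
    {f : V → V} (hf : Set.BijOn f (G.neighborSet x) (G.neighborSet y))
    (hcone : ∀ t ∈ G.neighborSet x, ConeEquiv G φ m x t y (f t)) (hxa : G.Adj x a)
    (hyb : G.Adj y b) (hab : ConeEquiv G φ m x a y b) :
    ∃ τ, Set.BijOn τ (G.neighborSet x \ {a}) (G.neighborSet y \ {b}) ∧
      ∀ t ∈ G.neighborSet x \ {a}, ConeEquiv G φ m x t y (τ t) := by
  classical
  let τ := Equiv.swap (f a) b ∘ f
  have hτ : Set.BijOn τ (G.neighborSet x) (G.neighborSet y) :=
    (Equiv.bijOn_swap (hf.mapsTo hxa) hyb).comp hf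
  have hτa : τ a = b := Equiv.swap_apply_left _ _
  refine ⟨τ, hτa ▸ hτ.sdiff_singleton hxa, fun t ⟨ht, hta⟩ => ?_⟩
  by_cases hftb : f t = b
  · have hτt : τ t = f a := by simp [τ, hftb]
    rw [hτt]
    exact ((hftb ▸ hcone t ht).trans (hab.symm hconn hxa)).trans (hcone a hxa)
  · have hτt : τ t = f t := Equiv.swap_apply_of_ne_of_ne (hf.injOn.ne ht hxa hta) hftb
    rw [hτt]
    exact hcone t ht

/-- The two families of cone equivalences are built together by induction on the depth:
a ball isometry at `w` need not send `a` to `b`, and is corrected by a swap using the cone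
equivalence from `(w, a)` to `(σ w, b)` of smaller depth. -/
theorem coneEquiv_of_bijOn (htree : G.IsTree) {n : ℕ} {a b : V} {σ : V → V}
    (hcol : φ a = φ b) (hσ : Set.BijOn σ (G.neighborSet a) (G.neighborSet b))
    (hball : ∀ w ∈ G.neighborSet a, BallEquiv G φ n w (σ w)) {m : ℕ} (hm : m ≤ n) :
    ∀ w ∈ G.neighborSet a, ConeEquiv G φ m a w b (σ w) ∧ ConeEquiv G φ m w a (σ w) b := by
  have hconn := htree.connected
  induction m with
  | zero =>
    intro w hw
    exact ⟨coneEquiv_zero hconn hw (hσ.mapsTo hw) (hball w hw).color_eq,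
      coneEquiv_zero hconn hw.symm (hσ.mapsTo hw).symm hcol⟩
  | succ m ih =>
    intro w hw
    have ih := ih (by omega)
    have hbw : G.Adj b (σ w) := hσ.mapsTo hw
    constructor
    · obtain ⟨f, hf, hfcone⟩ := ((hball w hw).mono hm).exists_bijOn_neighborSet hconn
      obtain ⟨τ, hτ, hτcone⟩ := exists_bijOn_diff_of_coneEquiv hconn hf
        (fun t ht => (hfcone t ht).2) hw.symm hbw.symm (ih w hw).2
      exact coneEquiv_succ_of_coneEquiv htree hw hbw (hball w hw).color_eq hτ hτcone
    · exact coneEquiv_succ_of_coneEquiv htree hw.symm hbw.symm hcol (hσ.sdiff_singleton hw)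
        fun t ht => (ih t ht.1).1

theorem ballEquiv_succ_of_bijOn (htree : G.IsTree) {n : ℕ} {a b : V} {σ : V → V}
    (hcol : φ a = φ b) (hσ : Set.BijOn σ (G.neighborSet a) (G.neighborSet b))
    (hball : ∀ w ∈ G.neighborSet a, BallEquiv G φ n w (σ w)) : BallEquiv G φ (n + 1) a b :=
  ballEquiv_succ_of_coneEquiv htree hcol hσ fun t ht =>
    (coneEquiv_of_bijOn htree hcol hσ hball le_rfl t ht).1

theorem card_adj_or [G.LocallyFinite] (v : V) {P Q : V → Prop} (hPQ : ∀ w, P w → ¬ Q w) :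
    Nat.card {w // G.Adj v w ∧ (P w ∨ Q w)} =
      Nat.card {w // G.Adj v w ∧ P w} + Nat.card {w // G.Adj v w ∧ Q w} := by
  have hfin : ∀ R : V → Prop, {w | G.Adj v w ∧ R w}.Finite := fun R =>
    (G.neighborSet v).toFinite.subset fun _ hw => hw.1
  have h := Set.ncard_union_eq (Set.disjoint_left.2 fun w hP hQ => hPQ w hP.2 hQ.2)
    (hfin P) (hfin Q)
  have hunion : {w | G.Adj v w ∧ (P w ∨ Q w)} =
      {w | G.Adj v w ∧ P w} ∪ {w | G.Adj v w ∧ Q w} := by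
    ext
    simp [and_or_left]
  rwa [← hunion] at h

theorem card_adj_ballEquiv_congr (hconn : G.Connected) (v : V) {k : ℕ} {x y : V}
    (h : BallEquiv G φ k x y) :
    Nat.card {w // G.Adj v w ∧ BallEquiv G φ k x w} =
      Nat.card {w // G.Adj v w ∧ BallEquiv G φ k y w} :=
  Nat.card_congr <| Equiv.subtypeEquivRight fun _ =>
    and_congr_right fun _ => ⟨(h.symm hconn).trans, h.trans⟩

theorem BallEquiv.card_adj_ballEquiv_eq (hconn : G.Connected) {n : ℕ} {a b : V}
    (h : BallEquiv G φ (n + 1) a b) (x : V) :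
    Nat.card {w // G.Adj a w ∧ BallEquiv G φ n x w} =
      Nat.card {w // G.Adj b w ∧ BallEquiv G φ n x w} := by
  obtain ⟨f, hf, hball⟩ := h.exists_bijOn_neighborSet hconn
  have hfx : Set.BijOn f {w | G.Adj a w ∧ BallEquiv G φ n x w}
      {w | G.Adj b w ∧ BallEquiv G φ n x w} := by
    refine ⟨fun w hw => ⟨hf.mapsTo hw.1, hw.2.trans (hball w hw.1).1⟩,
      hf.injOn.mono fun _ hw => hw.1, fun r hr => ?_⟩
    obtain ⟨w, hw, rfl⟩ := hf.surjOn hr.1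
    exact ⟨w, ⟨hw, hr.2.trans ((hball w hw).1.symm hconn)⟩, rfl⟩
  exact Nat.card_congr hfx.equiv

theorem ballEquiv_succ_of_card_adj_eq (htree : G.IsTree) [G.LocallyFinite] {n : ℕ} {a b : V}
    (hcol : φ a = φ b)
    (h : ∀ x, Nat.card {w // G.Adj a w ∧ BallEquiv G φ n x w} =
      Nat.card {w // G.Adj b w ∧ BallEquiv G φ n x w}) :
    BallEquiv G φ (n + 1) a b := by
  obtain ⟨σ, hσ, hball⟩ := exists_bijOn_of_card_eq (ballEquiv_equivalence htree.connected n)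
    (G.neighborSet a).toFinite (G.neighborSet b).toFinite h
  exact ballEquiv_succ_of_bijOn htree hcol hσ hball

theorem ballEquiv_succ_or_of_complexity_succ (hconn : G.Connected) {m : ℕ}
    (hb : complexity G φ (m + 1) = complexity G φ m + 1) {p q : V}
    (hpq : BallEquiv G φ m p q) (hpq' : ¬ BallEquiv G φ (m + 1) p q) {x y : V}
    (hxy : BallEquiv G φ m x y) :
    BallEquiv G φ (m + 1) x y ∨ BallEquiv G φ (m + 1) x p ∧ BallEquiv G φ (m + 1) y q ∨
      BallEquiv G φ (m + 1) x q ∧ BallEquiv G φ (m + 1) y p := by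
  have hmk := fun k => (ballEquiv_equivalence (φ := φ) hconn k).quot_mk_eq_iff
  let F : Quot (BallEquiv G φ (m + 1)) → Quot (BallEquiv G φ m) :=
    Quot.map id fun _ _ => BallEquiv.mono m.le_succ
  have hF : F.Surjective := fun c => by
    obtain ⟨u, rfl⟩ := Quot.exists_rep c
    exact ⟨Quot.mk _ u, rfl⟩
  simpa only [hmk] using hF.eq_or_of_card_eq_add_one hb (a := Quot.mk _ p) (b := Quot.mk _ q)
    (by rwa [Ne, hmk]) ((hmk m p q).2 hpq) (x := Quot.mk _ x) (y := Quot.mk _ y)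
    ((hmk m x y).2 hxy)

theorem card_adj_ballEquiv_succ_eq (hconn : G.Connected) [G.LocallyFinite] {m : ℕ}
    (hb : complexity G φ (m + 1) = complexity G φ m + 1)
    {a b p q : V} (hab : BallEquiv G φ (m + 1) a b) (hpq : BallEquiv G φ m p q)
    (hpq' : ¬ BallEquiv G φ (m + 1) p q)
    (hp : Nat.card {w // G.Adj a w ∧ BallEquiv G φ (m + 1) p w} =
      Nat.card {w // G.Adj b w ∧ BallEquiv G φ (m + 1) p w}) (x : V) :
    Nat.card {w // G.Adj a w ∧ BallEquiv G φ (m + 1) x w} =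
      Nat.card {w // G.Adj b w ∧ BallEquiv G φ (m + 1) x w} := by
  have hsplit := fun {u v : V} (h : BallEquiv G φ m u v) =>
    ballEquiv_succ_or_of_complexity_succ hconn hb hpq hpq' h
  by_cases hxp : BallEquiv G φ (m + 1) x p
  · rwa [card_adj_ballEquiv_congr hconn a hxp, card_adj_ballEquiv_congr hconn b hxp]
  by_cases hxq : BallEquiv G φ (m + 1) x q
  · have hclass : ∀ w, BallEquiv G φ m p w ↔
        BallEquiv G φ (m + 1) p w ∨ BallEquiv G φ (m + 1) q w := fun w => by
      refine ⟨fun h => ?_, ?_⟩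
      · rcases hsplit h with h | ⟨-, h⟩ | ⟨h, -⟩
        exacts [Or.inl h, Or.inr (h.symm hconn), absurd h hpq']
      · rintro (h | h)
        exacts [h.mono m.le_succ, hpq.trans (h.mono m.le_succ)]
    have hsum : ∀ v, Nat.card {w // G.Adj v w ∧ BallEquiv G φ m p w} =
        Nat.card {w // G.Adj v w ∧ BallEquiv G φ (m + 1) p w} +
          Nat.card {w // G.Adj v w ∧ BallEquiv G φ (m + 1) q w} := fun v => by
      simp_rw [hclass]
      exact card_adj_or v fun w hp hq => hpq' (hp.trans (hq.symm hconn))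
    have := hab.card_adj_ballEquiv_eq hconn p
    rw [hsum, hsum] at this
    rw [card_adj_ballEquiv_congr hconn a hxq, card_adj_ballEquiv_congr hconn b hxq]
    omega
  · have hclass : ∀ w, BallEquiv G φ (m + 1) x w ↔ BallEquiv G φ m x w := fun w =>
      ⟨BallEquiv.mono m.le_succ, fun h => (hsplit h).resolve_right
        (by rintro (⟨h, -⟩ | ⟨h, -⟩); exacts [hxp h, hxq h])⟩
    simp_rw [hclass]
    exact hab.card_adj_ballEquiv_eq hconn x

end

theorem extension_counts_differ_general {V A : Type*} (G : SimpleGraph V) [G.LocallyFinite]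
    (φ : V → A) (htree : G.IsTree)
    (N₀ c : ℕ) (hQS : ∀ m, N₀ ≤ m → complexity G φ m = m + c)
    (n : ℕ) (hn : N₀ + 1 ≤ n)
    -- `s` represents the unique special `n`-ball `S_n`
    (s : V)
    -- `a`, `b` represent the two inequivalent `(n+1)`-extensions `A_{n+1}`, `B_{n+1}` of `S_n`
    (a b : V) (ha : BallEquiv G φ n a s) (hb : BallEquiv G φ n b s)
    (hab : ¬ BallEquiv G φ (n + 1) a b)
    -- `s'` represents `S_{n-1}`; `an`, `bn` represent its two `n`-extensions `A_n`, `B_n`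
    (s' : V) (an bn : V) (han : BallEquiv G φ (n - 1) an s') (hbn : BallEquiv G φ (n - 1) bn s')
    (hanbn : ¬ BallEquiv G φ n an bn) :
    Nat.card {w : V // G.Adj a w ∧ BallEquiv G φ n an w} ≠
      Nat.card {w : V // G.Adj b w ∧ BallEquiv G φ n an w} := by
  intro hcount
  have hconn := htree.connected
  obtain ⟨m, rfl⟩ : ∃ m, n = m + 1 := ⟨n - 1, by omega⟩
  rw [Nat.add_sub_cancel] at han hbn
  have hcomplexity : complexity G φ (m + 1) = complexity G φ m + 1 := by
    rw [hQS m (by omega), hQS (m + 1) (by omega)]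
    omega
  have hab' : BallEquiv G φ (m + 1) a b := ha.trans (hb.symm hconn)
  exact hab <| ballEquiv_succ_of_card_adj_eq htree hab'.color_eq <|
    card_adj_ballEquiv_succ_eq hconn hcomplexity hab' (han.trans (hbn.symm hconn)) hanbn hcount

/-- Suppose `S_n ≠ C_n`. Then the two `(n+1)`-extensions `A_{n+1}`, `B_{n+1}` of `S_n`
cannot contain the same number of `n`-balls of class `A_n`; hence the choice of the
sequences `(A_n)`, `(B_n)` with `A_{n+1}` containing more balls of class `A_n` is
unique. -/
theorem extension_counts_differ {V A : Type*} (G : SimpleGraph V) [G.LocallyFinite]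
    (φ : V → A) [Finite A] (d : ℕ) (hd : 2 ≤ d)
    (htree : G.IsTree) (hreg : ∀ v : V, G.degree v = d)
    (hsurj : Function.Surjective φ)
    (N₀ c : ℕ) (hQS : ∀ m, N₀ ≤ m → complexity G φ m = m + c)
    (n : ℕ) (hn : N₀ + 1 ≤ n)
    -- `s` represents the unique special `n`-ball `S_n`
    (s : V) (hs : IsSpecialCenter G φ n s)
    (hsu : ∀ x : V, IsSpecialCenter G φ n x → BallEquiv G φ n s x)
    -- `a`, `b` represent the two inequivalent `(n+1)`-extensions `A_{n+1}`, `B_{n+1}` of `S_n`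
    (a b : V) (ha : BallEquiv G φ n a s) (hb : BallEquiv G φ n b s)
    (hab : ¬ BallEquiv G φ (n + 1) a b)
    -- `s'` represents `S_{n-1}`; `an`, `bn` represent its two `n`-extensions `A_n`, `B_n`
    (s' : V) (hs' : IsSpecialCenter G φ (n - 1) s')
    (an bn : V) (han : BallEquiv G φ (n - 1) an s') (hbn : BallEquiv G φ (n - 1) bn s')
    (hanbn : ¬ BallEquiv G φ n an bn)
    -- `s₁` represents `S_{n+1}`, whose radius-`n` restriction is `C_n`; assume `S_n ≠ C_n`
    (s₁ : V) (hs₁ : IsSpecialCenter G φ (n + 1) s₁)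
    (hSC : ¬ BallEquiv G φ n s s₁) :
    Nat.card {w : V // G.Adj a w ∧ BallEquiv G φ n an w} ≠
      Nat.card {w : V // G.Adj b w ∧ BallEquiv G φ n an w} :=
  extension_counts_differ_general G φ htree N₀ c hQS n hn s a b ha hb hab s' an bn han hbn hanbn
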